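/- arXiv:1409.5209 — 3 statements merged into one kernel-verified Lean document; each statement's English description precedes it below -/
import Mathlib

section
/- Let w : Fin t → ℝ, ω ∈ ℝ, and set w̃ = Fin.snoc w ω. Suppose Y° ∈ 𝒴 maximizes the function Y ↦ Δ(Y) − ∑_i w̃ i · (φ(Y*) i − φ(Y) i) over 𝒴. Then F_t(w) − F_{t+1}(w̃) ≥ −ω²/2 + ν·ω·(φ(Y*) t − φ(Y°) t), where the index t denotes the last (newly added) coordinate; in particular F_t(w) minus the infimum of F_{t+1} over Fin (t+1) → ℝ is bounded below by −ω²/2 + ν·ω·(φ(Y*) t − φ(Y°) t). (This is the key inequality in the proof of Proposition 2, bounding from below the decrease of the objective value when the weak learner t+1 is added.) -/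
/-- Key inequality in the proof of Proposition 2: the decrease of the objective value
when weak learner t+1 is added is bounded below by −ω²/2 + ν·ω·(φ(Y*)_t − φ(Y°)_t). -/
theorem stmt_1 (t : ℕ) (𝒴 : Type*) [Fintype 𝒴] [Nonempty 𝒴]
    (Δ : 𝒴 → ℝ) (Ystar : 𝒴) (hΔ : Δ Ystar = 0)
    (ν : ℝ) (hν : 0 ≤ ν)
    (φ : 𝒴 → (Fin (t + 1) → ℝ))
    (F₁ : (Fin (t + 1) → ℝ) → ℝ)
    (hF₁ : ∀ w : Fin (t + 1) → ℝ,
      F₁ w = (1 / 2) * ∑ i, (w i) ^ 2 +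
        ν * Finset.univ.sup' Finset.univ_nonempty
          (fun Y : 𝒴 => Δ Y - ∑ i, w i * (φ Ystar i - φ Y i)))
    (F₀ : (Fin t → ℝ) → ℝ)
    (hF₀ : ∀ w : Fin t → ℝ,
      F₀ w = (1 / 2) * ∑ i, (w i) ^ 2 +
        ν * Finset.univ.sup' Finset.univ_nonempty
          (fun Y : 𝒴 => Δ Y - ∑ i : Fin t, w i * (φ Ystar i.castSucc - φ Y i.castSucc)))
    (w : Fin t → ℝ) (ω : ℝ) (Ycirc : 𝒴)
    (hYcirc : ∀ Y : 𝒴,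
      Δ Y - ∑ i, (Fin.snoc w ω : Fin (t + 1) → ℝ) i * (φ Ystar i - φ Y i) ≤
      Δ Ycirc - ∑ i, (Fin.snoc w ω : Fin (t + 1) → ℝ) i * (φ Ystar i - φ Ycirc i)) :
    F₀ w - F₁ (Fin.snoc w ω) ≥
      -(ω ^ 2) / 2 + ν * ω * (φ Ystar (Fin.last t) - φ Ycirc (Fin.last t)) ∧
    F₀ w - (⨅ w' : Fin (t + 1) → ℝ, F₁ w') ≥
      -(ω ^ 2) / 2 + ν * ω * (φ Ystar (Fin.last t) - φ Ycirc (Fin.last t)) := by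
  -- Abbreviations
  set g : 𝒴 → ℝ := fun Y =>
    Δ Y - ∑ i, (Fin.snoc w ω : Fin (t + 1) → ℝ) i * (φ Ystar i - φ Y i) with hg
  -- sup over extended function equals value at Ycirc
  have hsup1 : Finset.univ.sup' Finset.univ_nonempty g = g Ycirc := by
    apply le_antisymm
    · exact Finset.sup'_le _ _ fun Y _ => hYcirc Y
    · exact Finset.le_sup' _ (Finset.mem_univ Ycirc)
  -- split the sum over Fin (t+1)
  have hsplit : ∀ Y : 𝒴,
      ∑ i, (Fin.snoc w ω : Fin (t + 1) → ℝ) i * (φ Ystar i - φ Y i) =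
      (∑ i : Fin t, w i * (φ Ystar i.castSucc - φ Y i.castSucc)) +
        ω * (φ Ystar (Fin.last t) - φ Y (Fin.last t)) := by
    intro Y
    rw [Fin.sum_univ_castSucc]
    simp [Fin.snoc_castSucc, Fin.snoc_last]
  have hsq : ∑ i, ((Fin.snoc w ω : Fin (t + 1) → ℝ) i) ^ 2 =
      (∑ i : Fin t, (w i) ^ 2) + ω ^ 2 := by
    rw [Fin.sum_univ_castSucc]
    simp [Fin.snoc_castSucc, Fin.snoc_last]
  -- sup for F₀ is at least value at Ycirc
  set g0 : 𝒴 → ℝ := fun Y =>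
    Δ Y - ∑ i : Fin t, w i * (φ Ystar i.castSucc - φ Y i.castSucc) with hg0
  have hsup0 : g0 Ycirc ≤ Finset.univ.sup' Finset.univ_nonempty g0 :=
    Finset.le_sup' _ (Finset.mem_univ Ycirc)
  have hrel : g0 Ycirc = g Ycirc + ω * (φ Ystar (Fin.last t) - φ Ycirc (Fin.last t)) := by
    simp only [hg0, hg, hsplit Ycirc]; ring
  have key : F₀ w - F₁ (Fin.snoc w ω) ≥
      -(ω ^ 2) / 2 + ν * ω * (φ Ystar (Fin.last t) - φ Ycirc (Fin.last t)) := by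
    rw [hF₀, hF₁, hsq, hsup1]
    have e : Finset.univ.sup' Finset.univ_nonempty
        (fun Y : 𝒴 => Δ Y - ∑ i : Fin t, w i * (φ Ystar i.castSucc - φ Y i.castSucc)) =
        Finset.univ.sup' Finset.univ_nonempty g0 := rfl
    rw [e]
    have := mul_le_mul_of_nonneg_left hsup0 hν
    rw [hrel] at this
    ring_nf at this ⊢
    linarith [this]
  refine ⟨key, ?_⟩
  -- The infimum is at most F₁ (snoc w ω), since F₁ is bounded below by 0
  have hbdd : ∀ v : Fin (t + 1) → ℝ, 0 ≤ F₁ v := by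
    intro v
    rw [hF₁]
    have h1 : (0:ℝ) ≤ Finset.univ.sup' Finset.univ_nonempty
        (fun Y : 𝒴 => Δ Y - ∑ i, v i * (φ Ystar i - φ Y i)) := by
      have : Δ Ystar - ∑ i, v i * (φ Ystar i - φ Ystar i) ≤
          Finset.univ.sup' Finset.univ_nonempty
            (fun Y : 𝒴 => Δ Y - ∑ i, v i * (φ Ystar i - φ Y i)) :=
        Finset.le_sup' (fun Y : 𝒴 => Δ Y - ∑ i, v i * (φ Ystar i - φ Y i)) (Finset.mem_univ Ystar)
      simpa [hΔ] using this
    have h2 : (0:ℝ) ≤ ∑ i, (v i) ^ 2 := Finset.sum_nonneg fun i _ => sq_nonneg _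
    positivity
  have hinf : (⨅ w' : Fin (t + 1) → ℝ, F₁ w') ≤ F₁ (Fin.snoc w ω) :=
    ciInf_le ⟨0, fun x ⟨v, hv⟩ => hv ▸ hbdd v⟩ _
  linarith
end

section
/- Suppose there exist ω ∈ ℝ and Y° ∈ 𝒴 such that Y° maximizes Y ↦ Δ(Y) − ∑_i (Fin.snoc w ω) i · (φ(Y*) i − φ(Y) i) over 𝒴 and ω = ν·(φ(Y*) t − φ(Y°) t), where the index t denotes the last coordinate. Then F_t(w) − inf_{w' : Fin (t+1) → ℝ} F_{t+1}(w') ≥ (ν²/2)·(φ(Y*) t − φ(Y°) t)². (Proposition 2, made precise: the decrease of the objective value between iterations t and t+1 is at least a constant multiple of the squared joint-feature-map gap of the newly added weak learner between the true ordering Y* and the maximizing ordering Y°.) -/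
/-!
Extending `w` by the coordinate `ω = ν g`, where `g` is the feature gap of the new learner at the
maximizer `Y°`, the max term of `F_{t+1}` is attained at `Y°`, so it equals the max term of `F_t`
evaluated at `Y°` (a lower bound for `F_t(w)`) minus `ω g`. Hence
`F_t(w) - F_{t+1}(snoc w ω) ≥ ν ω g - ω²/2 = ν² g²/2`, and the infimum of `F_{t+1}` is at most
its value at `snoc w ω` (it is bounded below by `ν Δ(Y*)`, as the margin term vanishes at `Y*`).
-/

open Finset

section StructuredHinge

variable {𝒴 ι : Type*} [Fintype 𝒴] [Nonempty 𝒴] [Fintype ι]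

/-- `ψ Y` plays the role of the feature difference `φ(Y*) - φ(Y)`. -/
noncomputable def structuredHingeObjective (ν : ℝ) (Δ : 𝒴 → ℝ) (ψ : 𝒴 → ι → ℝ)
    (w : ι → ℝ) : ℝ :=
  (1 / 2) * ∑ i, w i ^ 2 + ν * univ.sup' univ_nonempty (fun Y => Δ Y - ∑ i, w i * ψ Y i)

variable {ν : ℝ} {Δ : 𝒴 → ℝ} {ψ : 𝒴 → ι → ℝ}

lemma structuredHingeObjective_ge (hν : 0 ≤ ν) (w : ι → ℝ) (Y : 𝒴) :
    (1 / 2) * ∑ i, w i ^ 2 + ν * (Δ Y - ∑ i, w i * ψ Y i) ≤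
      structuredHingeObjective ν Δ ψ w := by
  unfold structuredHingeObjective
  gcongr
  exact le_sup' (fun Y => Δ Y - ∑ i, w i * ψ Y i) (mem_univ Y)

lemma structuredHingeObjective_eq_of_isMax (w : ι → ℝ) {Y₀ : 𝒴}
    (hY₀ : ∀ Y, Δ Y - ∑ i, w i * ψ Y i ≤ Δ Y₀ - ∑ i, w i * ψ Y₀ i) :
    structuredHingeObjective ν Δ ψ w =
      (1 / 2) * ∑ i, w i ^ 2 + ν * (Δ Y₀ - ∑ i, w i * ψ Y₀ i) := by
  unfold structuredHingeObjective
  congr 2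
  exact le_antisymm (sup'_le _ _ fun Y _ => hY₀ Y) (le_sup' (fun Y => Δ Y - ∑ i, w i * ψ Y i) (mem_univ Y₀))

lemma bddBelow_range_structuredHingeObjective (hν : 0 ≤ ν) {Y₀ : 𝒴} (hψ : ψ Y₀ = 0) :
    BddBelow (Set.range (structuredHingeObjective ν Δ ψ)) := by
  refine ⟨ν * Δ Y₀, ?_⟩
  rintro _ ⟨w, rfl⟩
  have hsq : 0 ≤ ∑ i, w i ^ 2 := sum_nonneg fun i _ => sq_nonneg (w i)
  have := structuredHingeObjective_ge (Δ := Δ) (ψ := ψ) hν w Y₀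
  simp only [hψ, Pi.zero_apply, mul_zero, sum_const_zero, sub_zero] at this
  linarith

end StructuredHinge

lemma Fin.sum_snoc_mul {t : ℕ} (w : Fin t → ℝ) (ω : ℝ) (v : Fin (t + 1) → ℝ) :
    ∑ i, (Fin.snoc w ω : Fin (t + 1) → ℝ) i * v i =
      ∑ i : Fin t, w i * v i.castSucc + ω * v (Fin.last t) := by
  simp only [Fin.sum_univ_castSucc, Fin.snoc_castSucc, Fin.snoc_last]

lemma Fin.sum_snoc_sq {t : ℕ} (w : Fin t → ℝ) (ω : ℝ) :
    ∑ i, (Fin.snoc w ω : Fin (t + 1) → ℝ) i ^ 2 = ∑ i : Fin t, w i ^ 2 + ω ^ 2 := by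
  simp only [Fin.sum_univ_castSucc, Fin.snoc_castSucc, Fin.snoc_last]

lemma structuredHingeObjective_sub_snoc_ge {𝒴 : Type*} [Fintype 𝒴] [Nonempty 𝒴] {t : ℕ}
    {ν : ℝ} (hν : 0 ≤ ν) (Δ : 𝒴 → ℝ) (ψ : 𝒴 → Fin (t + 1) → ℝ) (w : Fin t → ℝ) (ω : ℝ)
    {Y₀ : 𝒴}
    (hY₀ : ∀ Y, Δ Y - ∑ i, (Fin.snoc w ω : Fin (t + 1) → ℝ) i * ψ Y i ≤
      Δ Y₀ - ∑ i, (Fin.snoc w ω : Fin (t + 1) → ℝ) i * ψ Y₀ i) :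
    ν * ω * ψ Y₀ (Fin.last t) - ω ^ 2 / 2 ≤
      structuredHingeObjective ν Δ (fun Y i => ψ Y i.castSucc) w -
        structuredHingeObjective ν Δ ψ (Fin.snoc w ω) := by
  have hold := structuredHingeObjective_ge (Δ := Δ) (ψ := fun Y i => ψ Y i.castSucc) hν w Y₀
  rw [structuredHingeObjective_eq_of_isMax _ hY₀, Fin.sum_snoc_sq, Fin.sum_snoc_mul]
  linarith

theorem stmt_2_general (t : ℕ) (𝒴 : Type*) [Fintype 𝒴] [Nonempty 𝒴]
    (Δ : 𝒴 → ℝ) (Ystar : 𝒴)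
    (ν : ℝ) (hν : 0 ≤ ν)
    (φ : 𝒴 → (Fin (t + 1) → ℝ))
    (F₁ : (Fin (t + 1) → ℝ) → ℝ)
    (hF₁ : ∀ w : Fin (t + 1) → ℝ,
      F₁ w = (1 / 2) * ∑ i, (w i) ^ 2 +
        ν * Finset.univ.sup' Finset.univ_nonempty
          (fun Y : 𝒴 => Δ Y - ∑ i, w i * (φ Ystar i - φ Y i)))
    (F₀ : (Fin t → ℝ) → ℝ)
    (hF₀ : ∀ w : Fin t → ℝ,
      F₀ w = (1 / 2) * ∑ i, (w i) ^ 2 +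
        ν * Finset.univ.sup' Finset.univ_nonempty
          (fun Y : 𝒴 => Δ Y - ∑ i : Fin t, w i * (φ Ystar i.castSucc - φ Y i.castSucc)))
    (w : Fin t → ℝ) (ω : ℝ) (Ycirc : 𝒴)
    (hYcirc : ∀ Y : 𝒴,
      Δ Y - ∑ i, (Fin.snoc w ω : Fin (t + 1) → ℝ) i * (φ Ystar i - φ Y i) ≤
      Δ Ycirc - ∑ i, (Fin.snoc w ω : Fin (t + 1) → ℝ) i * (φ Ystar i - φ Ycirc i))
    (hω : ω = ν * (φ Ystar (Fin.last t) - φ Ycirc (Fin.last t))) :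
    F₀ w - (⨅ w' : Fin (t + 1) → ℝ, F₁ w') ≥
      (ν ^ 2 / 2) * (φ Ystar (Fin.last t) - φ Ycirc (Fin.last t)) ^ 2 := by
  set ψ : 𝒴 → Fin (t + 1) → ℝ := fun Y i => φ Ystar i - φ Y i
  have hF₁ψ : F₁ = structuredHingeObjective ν Δ ψ := funext hF₁
  have hF₀ψ : F₀ = structuredHingeObjective ν Δ (fun Y i => ψ Y i.castSucc) := funext hF₀
  have hbdd : BddBelow (Set.range F₁) :=
    hF₁ψ ▸ bddBelow_range_structuredHingeObjective hν (Y₀ := Ystar) (funext fun i => sub_self _)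
  calc (ν ^ 2 / 2) * ψ Ycirc (Fin.last t) ^ 2
      = ν * ω * ψ Ycirc (Fin.last t) - ω ^ 2 / 2 := by rw [hω]; ring
    _ ≤ F₀ w - F₁ (Fin.snoc w ω) := by
      rw [hF₀ψ, hF₁ψ]
      exact structuredHingeObjective_sub_snoc_ge hν Δ ψ w ω hYcirc
    _ ≤ F₀ w - ⨅ w', F₁ w' := by gcongr; exact ciInf_le hbdd _

/-- Proposition 2: the decrease of the objective value between iterations t and t+1 is
at least (ν²/2)·(φ(Y*)_t − φ(Y°)_t)². -/
theorem stmt_2 (t : ℕ) (𝒴 : Type*) [Fintype 𝒴] [Nonempty 𝒴]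
    (Δ : 𝒴 → ℝ) (Ystar : 𝒴) (hΔ : Δ Ystar = 0)
    (ν : ℝ) (hν : 0 ≤ ν)
    (φ : 𝒴 → (Fin (t + 1) → ℝ))
    (F₁ : (Fin (t + 1) → ℝ) → ℝ)
    (hF₁ : ∀ w : Fin (t + 1) → ℝ,
      F₁ w = (1 / 2) * ∑ i, (w i) ^ 2 +
        ν * Finset.univ.sup' Finset.univ_nonempty
          (fun Y : 𝒴 => Δ Y - ∑ i, w i * (φ Ystar i - φ Y i)))
    (F₀ : (Fin t → ℝ) → ℝ)
    (hF₀ : ∀ w : Fin t → ℝ,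
      F₀ w = (1 / 2) * ∑ i, (w i) ^ 2 +
        ν * Finset.univ.sup' Finset.univ_nonempty
          (fun Y : 𝒴 => Δ Y - ∑ i : Fin t, w i * (φ Ystar i.castSucc - φ Y i.castSucc)))
    (w : Fin t → ℝ) (ω : ℝ) (Ycirc : 𝒴)
    (hYcirc : ∀ Y : 𝒴,
      Δ Y - ∑ i, (Fin.snoc w ω : Fin (t + 1) → ℝ) i * (φ Ystar i - φ Y i) ≤
      Δ Ycirc - ∑ i, (Fin.snoc w ω : Fin (t + 1) → ℝ) i * (φ Ystar i - φ Ycirc i))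
    (hω : ω = ν * (φ Ystar (Fin.last t) - φ Ycirc (Fin.last t))) :
    F₀ w - (⨅ w' : Fin (t + 1) → ℝ, F₁ w') ≥
      (ν ^ 2 / 2) * (φ Ystar (Fin.last t) - φ Ycirc (Fin.last t)) ^ 2 :=
  stmt_2_general t 𝒴 Δ Ystar ν hν φ F₁ hF₁ F₀ hF₀ w ω Ycirc hYcirc hω
end

section
/- Suppose w* : Fin (t+1) → ℝ is a global minimizer of F_{t+1} whose last coordinate w* t is nonzero, and w₀ : Fin t → ℝ is a global minimizer of F_t. Then F_{t+1}(w*) < F_t(w₀). (The strict-decrease case in the proof of Proposition 1: if the optimal coefficient of the newly added weak learner is nonzero, re-solving the problem strictly reduces the objective value.) -/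
/-- Strict-decrease case in the proof of Proposition 1: if the optimal coefficient of
the newly added weak learner is nonzero, re-solving strictly reduces the objective. -/
theorem stmt_3 (t : ℕ) (𝒴 : Type*) [Fintype 𝒴] [Nonempty 𝒴]
    (Δ : 𝒴 → ℝ) (Ystar : 𝒴) (hΔ : Δ Ystar = 0)
    (ν : ℝ) (hν : 0 ≤ ν)
    (φ : 𝒴 → (Fin (t + 1) → ℝ))
    (F₁ : (Fin (t + 1) → ℝ) → ℝ)
    (hF₁ : ∀ w : Fin (t + 1) → ℝ,
      F₁ w = (1 / 2) * ∑ i, (w i) ^ 2 +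
        ν * Finset.univ.sup' Finset.univ_nonempty
          (fun Y : 𝒴 => Δ Y - ∑ i, w i * (φ Ystar i - φ Y i)))
    (F₀ : (Fin t → ℝ) → ℝ)
    (hF₀ : ∀ w : Fin t → ℝ,
      F₀ w = (1 / 2) * ∑ i, (w i) ^ 2 +
        ν * Finset.univ.sup' Finset.univ_nonempty
          (fun Y : 𝒴 => Δ Y - ∑ i : Fin t, w i * (φ Ystar i.castSucc - φ Y i.castSucc)))
    (wstar : Fin (t + 1) → ℝ)
    (hwstar : ∀ w : Fin (t + 1) → ℝ, F₁ wstar ≤ F₁ w)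
    (hlast : wstar (Fin.last t) ≠ 0)
    (w₀ : Fin t → ℝ)
    (hw₀ : ∀ w : Fin t → ℝ, F₀ w₀ ≤ F₀ w) :
    F₁ wstar < F₀ w₀ := by
  classical
  set y : Fin (t + 1) → ℝ := Fin.snoc w₀ 0 with hy
  -- F₁ y = F₀ w₀
  have hext : F₁ y = F₀ w₀ := by
    rw [hF₁, hF₀]
    congr 1
    · congr 1
      rw [Fin.sum_univ_castSucc]
      simp [hy]
    · congr 1
      apply Finset.sup'_congr _ rfl
      intro Y _
      congr 1
      rw [Fin.sum_univ_castSucc]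
      simp [hy]
  have hle : F₁ wstar ≤ F₀ w₀ := hext ▸ hwstar y
  rcases lt_or_eq_of_le hle with h | h
  · exact h
  exfalso
  -- equality: midpoint beats the minimum, contradiction with strict convexity
  set m : Fin (t + 1) → ℝ := fun i => (wstar i + y i) / 2 with hm
  have hylast : y (Fin.last t) = 0 := by simp [hy]
  -- quadratic part strictly convex
  have hquad : ∑ i, (m i) ^ 2 < ((∑ i, (wstar i) ^ 2) + ∑ i, (y i) ^ 2) / 2 := by
    have : ∑ i, (m i) ^ 2 < ∑ i, ((wstar i) ^ 2 + (y i) ^ 2) / 2 := by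
      apply Finset.sum_lt_sum
      · intro i _
        simp only [hm]
        nlinarith [sq_nonneg (wstar i - y i)]
      · refine ⟨Fin.last t, Finset.mem_univ _, ?_⟩
        simp only [hm]
        have : wstar (Fin.last t) ≠ y (Fin.last t) := by rw [hylast]; exact hlast
        have hpos : 0 < (wstar (Fin.last t) - y (Fin.last t)) ^ 2 :=
          pow_pos (abs_pos.mpr (sub_ne_zero_of_ne this)) 2 |>.trans_eq (by rw [sq_abs])
        nlinarith [hpos]
    calc ∑ i, (m i) ^ 2 < ∑ i, ((wstar i) ^ 2 + (y i) ^ 2) / 2 := this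
      _ = ((∑ i, (wstar i) ^ 2) + ∑ i, (y i) ^ 2) / 2 := by
          rw [← Finset.sum_add_distrib, Finset.sum_div]
  -- sup part convex
  set g : (Fin (t + 1) → ℝ) → ℝ := fun w =>
    Finset.univ.sup' Finset.univ_nonempty
      (fun Y : 𝒴 => Δ Y - ∑ i, w i * (φ Ystar i - φ Y i)) with hg
  have hsup : g m ≤ (g wstar + g y) / 2 := by
    apply Finset.sup'_le
    intro Y _
    have h1 : Δ Y - ∑ i, wstar i * (φ Ystar i - φ Y i) ≤ g wstar :=
      Finset.le_sup' (fun Y : 𝒴 => Δ Y - ∑ i, wstar i * (φ Ystar i - φ Y i))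
        (Finset.mem_univ Y)
    have h2 : Δ Y - ∑ i, y i * (φ Ystar i - φ Y i) ≤ g y :=
      Finset.le_sup' (fun Y : 𝒴 => Δ Y - ∑ i, y i * (φ Ystar i - φ Y i))
        (Finset.mem_univ Y)
    have hmid : Δ Y - ∑ i, m i * (φ Ystar i - φ Y i) =
        ((Δ Y - ∑ i, wstar i * (φ Ystar i - φ Y i)) +
         (Δ Y - ∑ i, y i * (φ Ystar i - φ Y i))) / 2 := by
      simp only [hm]
      have hsum : ∑ x, (wstar x + y x) / 2 * (φ Ystar x - φ Y x)
          = ((∑ i, wstar i * (φ Ystar i - φ Y i)) +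
             ∑ i, y i * (φ Ystar i - φ Y i)) / 2 := by
        rw [← Finset.sum_add_distrib, Finset.sum_div]
        exact Finset.sum_congr rfl fun i _ => by ring
      rw [hsum]; ring
    rw [hmid]
    linarith
  have hlt : F₁ m < F₁ wstar := by
    rw [hF₁ m, hF₁ wstar]
    have hFy : F₁ y = (1 / 2) * ∑ i, (y i) ^ 2 + ν * g y := hF₁ y
    have hFw : F₁ wstar = (1 / 2) * ∑ i, (wstar i) ^ 2 + ν * g wstar := hF₁ wstar
    have heq : F₁ wstar = F₁ y := by rw [hext, ← h]
    have hνs : ν * g m ≤ ν * ((g wstar + g y) / 2) := mul_le_mul_of_nonneg_left hsup hν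
    have : ν * g wstar = ν * g y + (1 / 2) * ∑ i, (y i) ^ 2 - (1 / 2) * ∑ i, (wstar i) ^ 2 := by
      rw [hFw, hFy] at heq; linarith
    show (1 / 2) * ∑ i, (m i) ^ 2 + ν * g m <
      (1 / 2) * ∑ i, (wstar i) ^ 2 + ν * g wstar
    linarith
  exact absurd (hwstar m) (not_le.mpr hlt)
end
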